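/- Let F be the unitary DFT on C^J with |J| = n, and let K, L ⊆ J with p = |K| ≤ |L|. Let σ_1 ≥ ... ≥ σ_p be the singular values of F*_{L,K} and τ_1 ≥ ... ≥ τ_p the singular values of F*_{L^c,K}, both in decreasing order. Then for each 1 ≤ j ≤ p, σ_j² = 1 − τ_{p−j+1}². -/

import Mathlib

/-!
Since `F` is unitary, the columns of `F*` indexed by `K` are orthonormal, so splitting the rows
into `L` and `Lᶜ` gives `A + B = 1` for the Gram matrices `A = (F*_{L,K})ᴴ F*_{L,K}` and
`B = (F*_{Lᶜ,K})ᴴ F*_{Lᶜ,K}`. Hence `B = 1 - A` has the eigenvalues `1 - λ` for the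
eigenvalues `λ` of `A`, and `x ↦ 1 - x` reverses the decreasing order.
-/

open Finset Matrix Polynomial

theorem IsPrimitiveRoot.sum_range_pow_div_pow {K : Type*} [Field K] {ζ : K} {n : ℕ}
    (hζ : IsPrimitiveRoot ζ n) {i j : ℕ} (hi : i < n) (hj : j < n) :
    ∑ l ∈ range n, (ζ ^ i / ζ ^ j) ^ l = if i = j then (n : K) else 0 := by
  have hζj : ζ ^ j ≠ 0 := pow_ne_zero _ (hζ.ne_zero (by omega))
  split_ifs with hij
  · simp [hij, div_self hζj]
  · have hne : ζ ^ i / ζ ^ j ≠ 1 := fun h =>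
      hij (hζ.pow_inj hi hj ((div_eq_one_iff_eq hζj).1 h))
    rw [geom_sum_eq hne, div_pow, ← pow_mul, ← pow_mul, mul_comm i, mul_comm j, pow_mul,
      pow_mul, hζ.pow_eq_one]
    simp

theorem Complex.isPrimitiveRoot_exp_neg (n : ℕ) (hn : n ≠ 0) :
    IsPrimitiveRoot (Complex.exp (-(2 * Real.pi * Complex.I) / n)) n := by
  simpa [neg_div, Complex.exp_neg] using (Complex.isPrimitiveRoot_exp n hn).inv

noncomputable def dftMatrix (n : ℕ) : Matrix (Fin n) (Fin n) ℂ := fun j k =>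
  Complex.exp (-(2 * Real.pi * Complex.I) * ((j : ℕ) : ℂ) * ((k : ℕ) : ℂ) / (n : ℂ)) /
    (Real.sqrt n : ℂ)

theorem dftMatrix_apply_eq_pow (n : ℕ) (j k : Fin n) :
    dftMatrix n j k =
      Complex.exp (-(2 * Real.pi * Complex.I) / n) ^ ((j : ℕ) * k) / (Real.sqrt n : ℂ) := by
  rw [dftMatrix, ← Complex.exp_nat_mul]
  congr 2
  push_cast
  ring

theorem dftMatrix_mul_conjTranspose (n : ℕ) : dftMatrix n * (dftMatrix n)ᴴ = 1 := by
  ext k k'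
  have hn : n ≠ 0 := k.pos.ne'
  rw [mul_apply, one_apply]
  simp only [conjTranspose_apply, dftMatrix_apply_eq_pow]
  set ω := Complex.exp (-(2 * Real.pi * Complex.I) / n)
  have hω : IsPrimitiveRoot ω n := Complex.isPrimitiveRoot_exp_neg n hn
  have hconj : star ω = ω⁻¹ := (Complex.inv_eq_conj (hω.norm'_eq_one hn)).symm
  have hsqrt : (Real.sqrt n : ℂ) * (Real.sqrt n : ℂ) = n := by
    rw [← Complex.ofReal_mul, Real.mul_self_sqrt n.cast_nonneg, Complex.ofReal_natCast]
  have hterm (l : Fin n) : ω ^ ((k : ℕ) * l) / (Real.sqrt n : ℂ) *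
      star (ω ^ ((k' : ℕ) * l) / (Real.sqrt n : ℂ)) =
        (ω ^ (k : ℕ) / ω ^ (k' : ℕ)) ^ (l : ℕ) / n := by
    rw [star_div₀, star_pow, hconj, Complex.star_def, Complex.conj_ofReal, div_mul_div_comm,
      hsqrt, div_pow, ← pow_mul, ← pow_mul, inv_pow]
    ring
  simp only [hterm]
  rw [← sum_div, Fin.sum_univ_eq_sum_range (fun l => (ω ^ (k : ℕ) / ω ^ (k' : ℕ)) ^ l),
    hω.sum_range_pow_div_pow k.isLt k'.isLt]
  simp only [Fin.val_inj]
  split_ifs <;> simp [hn]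

theorem Matrix.conjTranspose_mul_self_submatrix_add_compl {m o k α : Type*} [Fintype m]
    [DecidableEq m] [NonUnitalNonAssocSemiring α] [StarRing α] (M : Matrix m o α)
    (L : Finset m) (c : k → o) :
    (M.submatrix ((↑) : L → m) c)ᴴ * M.submatrix ((↑) : L → m) c +
      (M.submatrix ((↑) : ↥Lᶜ → m) c)ᴴ * M.submatrix ((↑) : ↥Lᶜ → m) c =
        (Mᴴ * M).submatrix c c := by
  ext i j
  simp only [add_apply, mul_apply, conjTranspose_apply, submatrix_apply]
  rw [sum_coe_sort L (fun l => star (M l (c i)) * M l (c j)),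
    sum_coe_sort Lᶜ (fun l => star (M l (c i)) * M l (c j)), sum_add_sum_compl]

theorem Matrix.IsHermitian.map_eigenvalues_of_add_eq_one {m 𝕜 : Type*} [Fintype m]
    [DecidableEq m] [RCLike 𝕜] {A B : Matrix m m 𝕜} (hA : A.IsHermitian) (hB : B.IsHermitian)
    (hAB : A + B = 1) :
    univ.val.map hB.eigenvalues = univ.val.map (fun i => 1 - hA.eigenvalues i) := by
  -- Writing `B = 1 - A` in the functional calculus of `A` gives `B.charpoly = ∏ (X - (1 - λᵢ))`.
  have hcfc : cfc (fun x : ℝ => 1 - x) A = B := by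
    rw [cfc_sub (fun _ => 1) (fun x => x) A, cfc_const_one ℝ A, cfc_id' ℝ A, ← hAB,
      add_sub_cancel_left]
  have hcharpoly := hA.charpoly_cfc_eq (fun x => 1 - x)
  rw [hcfc] at hcharpoly
  have hroots := hB.roots_charpoly_eq_eigenvalues
  rw [hcharpoly, roots_prod _ _ (prod_ne_zero_iff.2 fun i _ => X_sub_C_ne_zero _)] at hroots
  simp only [roots_X_sub_C] at hroots
  apply Multiset.map_injective (RCLike.ofReal_injective (K := 𝕜))
  simpa [Multiset.map_map, Function.comp_def] using hroots.symm

theorem Antitone.eq_of_map_univ_eq {α : Type*} [LinearOrder α] {p : ℕ} {f g : Fin p → α}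
    (hf : Antitone f) (hg : Antitone g) (h : univ.val.map f = univ.val.map g) : f = g := by
  refine List.ofFn_injective (List.Perm.eq_of_sortedGE ?_ ?_ ?_)
  · exact List.sortedGE_ofFn_iff.2 hf
  · exact List.sortedGE_ofFn_iff.2 hg
  · rwa [← Multiset.coe_eq_coe, ← Fin.univ_val_map, ← Fin.univ_val_map]

theorem stmt1_general (n : ℕ) (K L : Finset (Fin n))
    (F : Matrix (Fin n) (Fin n) ℂ)
    (hF : F = fun (j k : Fin n) => Complex.exp (-(2 * Real.pi * Complex.I) *
        ((j : ℕ) : ℂ) * ((k : ℕ) : ℂ) / (n : ℂ)) / (Real.sqrt n : ℂ))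
    (σ τ : Fin K.card → ℝ)
    (hσmono : Antitone σ) (hτmono : Antitone τ)
    (hσ0 : ∀ j, 0 ≤ σ j) (hτ0 : ∀ j, 0 ≤ τ j)
    (hσ : (Finset.univ.val.map fun j => σ j ^ 2) =
      Finset.univ.val.map fun k : ↥K =>
        (Matrix.isHermitian_conjTranspose_mul_self
          ((Fᴴ).submatrix (fun l : ↥L => (l : Fin n)) (fun k : ↥K => (k : Fin n)))).eigenvalues k)
    (hτ : (Finset.univ.val.map fun j => τ j ^ 2) =
      Finset.univ.val.map fun k : ↥K =>
        (Matrix.isHermitian_conjTranspose_mul_self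
          ((Fᴴ).submatrix (fun l : ↥(Lᶜ) => (l : Fin n)) (fun k : ↥K => (k : Fin n)))).eigenvalues k)
    (j : Fin K.card) :
    σ j ^ 2 = 1 - τ j.rev ^ 2 := by
  have hunitary : Fᴴᴴ * Fᴴ = 1 := by
    rw [conjTranspose_conjTranspose, hF]
    exact dftMatrix_mul_conjTranspose n
  have hgram := conjTranspose_mul_self_submatrix_add_compl Fᴴ L ((↑) : K → Fin n)
  rw [hunitary, submatrix_one _ Subtype.val_injective] at hgram
  have hcompl := (isHermitian_conjTranspose_mul_self _).map_eigenvalues_of_add_eq_one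
    (isHermitian_conjTranspose_mul_self _) ((add_comm _ _).trans hgram)
  have hσ_sq : univ.val.map (fun j => σ j ^ 2) =
      univ.val.map (fun j : Fin K.card => 1 - τ j.rev ^ 2) :=
    calc univ.val.map (fun j => σ j ^ 2) = univ.val.map (fun j => 1 - τ j ^ 2) := by
          have hτ' := congrArg (Multiset.map fun x : ℝ => 1 - x) hτ
          simp only [Multiset.map_map, Function.comp_def] at hτ'
          rw [hσ, hτ']
          exact hcompl
      _ = univ.val.map (fun j : Fin K.card => 1 - τ j.rev ^ 2) := by
          conv_lhs => rw [← Multiset.map_univ_val_equiv Fin.revPerm, Multiset.map_map]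
          rfl
  have hσ_anti : Antitone fun j => σ j ^ 2 := fun i j hij =>
    pow_le_pow_left₀ (hσ0 j) (hσmono hij) 2
  have hτ_anti : Antitone fun j : Fin K.card => 1 - τ j.rev ^ 2 := fun i j hij =>
    sub_le_sub_left (pow_le_pow_left₀ (hτ0 _) (hτmono (Fin.rev_le_rev.2 hij)) 2) 1
  exact congrFun (hσ_anti.eq_of_map_univ_eq hτ_anti hσ_sq) j

/-- complementary relation between the singular values of `F*_{L,K}`
and `F*_{Lᶜ,K}` for the unitary DFT `F`. -/
theorem stmt1 (n : ℕ) (hn : 0 < n) (K L : Finset (Fin n)) (hKL : K.card ≤ L.card)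
    (F : Matrix (Fin n) (Fin n) ℂ)
    (hF : F = fun (j k : Fin n) => Complex.exp (-(2 * Real.pi * Complex.I) *
        ((j : ℕ) : ℂ) * ((k : ℕ) : ℂ) / (n : ℂ)) / (Real.sqrt n : ℂ))
    (σ τ : Fin K.card → ℝ)
    (hσmono : Antitone σ) (hτmono : Antitone τ)
    (hσ0 : ∀ j, 0 ≤ σ j) (hτ0 : ∀ j, 0 ≤ τ j)
    (hσ : (Finset.univ.val.map fun j => σ j ^ 2) =
      Finset.univ.val.map fun k : ↥K =>
        (Matrix.isHermitian_conjTranspose_mul_self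
          ((Fᴴ).submatrix (fun l : ↥L => (l : Fin n)) (fun k : ↥K => (k : Fin n)))).eigenvalues k)
    (hτ : (Finset.univ.val.map fun j => τ j ^ 2) =
      Finset.univ.val.map fun k : ↥K =>
        (Matrix.isHermitian_conjTranspose_mul_self
          ((Fᴴ).submatrix (fun l : ↥(Lᶜ) => (l : Fin n)) (fun k : ↥K => (k : Fin n)))).eigenvalues k)
    (j : Fin K.card) :
    σ j ^ 2 = 1 - τ j.rev ^ 2 :=
  stmt1_general n K L F hF σ τ hσmono hτmono hσ0 hτ0 hσ hτ j
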